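/- arXiv:2511.05291 — 2 statements merged into one kernel-verified Lean document; each statement's English description precedes it below -/
import Mathlib

section
/- Let (N,v) be a monotonic TU game with veto player a and |N| ≥ 2. Then the least core value ε* satisfies ε* ≥ (v(N) − max{ v(S) : S ∋ a, |S| = |N|−1 }) / |N|. -/
open Finset

/-- The strong ε-core of a TU game. -/
def epsCore {ι : Type*} [Fintype ι] [DecidableEq ι] (v : Finset ι → ℝ) (ε : ℝ) :
    Set (ι → ℝ) :=
  {x | (∑ i, x i) = v Finset.univ ∧
    ∀ S : Finset ι, S.Nonempty → S ≠ Finset.univ → v S + ε ≤ ∑ i ∈ S, x i}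

/-- The least core value: the largest ε for which the strong ε-core is nonempty. -/
noncomputable def lcv {ι : Type*} [Fintype ι] [DecidableEq ι] (v : Finset ι → ℝ) : ℝ :=
  sSup {ε : ℝ | (epsCore v ε).Nonempty}

/-- The "leave-one-out" coalitions containing `a`: those `S ∋ a` with `|S| = |N| − 1`. -/
def Pbar {ι : Type*} [Fintype ι] [DecidableEq ι] (a : ι) : Finset (Finset ι) :=
  Finset.univ.filter (fun S => a ∈ S ∧ S.card = Fintype.card ι - 1)

/-!
Give every player `ε` and the veto player `a` additionally `v N - |N| ε`. A coalition without
`a` is worth `0` and receives `|S| ε ≥ ε`. A proper coalition `S ∋ a` lies in a leave-one-out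
coalition, so `v S ≤ M` (the maximum of `v` over `Pbar a`) by monotonicity, while it receives
at least `v N - (|N| - 1) ε`. Both constraints hold once `0 ≤ ε` and `|N| ε ≤ v N - M`, in
particular for `ε = (v N - M) / |N|`; and the set of feasible `ε` is bounded above as soon as
there are two players.
-/

section

variable {ι : Type*} [Fintype ι] [DecidableEq ι] (v : Finset ι → ℝ)

theorem bddAbove_setOf_epsCore_nonempty [Nontrivial ι] :
    BddAbove {ε : ℝ | (epsCore v ε).Nonempty} := by
  obtain ⟨i⟩ := (inferInstance : Nonempty ι)
  -- the constraints of `{i}` and `{i}ᶜ` add up to `2 ε ≤ v N - v {i} - v {i}ᶜ`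
  refine ⟨(v univ - v {i} - v {i}ᶜ) / 2, ?_⟩
  rintro ε ⟨x, hx_eff, hx_core⟩
  have h_single := hx_core {i} (singleton_nonempty i) (singleton_ne_univ i)
  have h_compl := hx_core {i}ᶜ ((exists_ne i).imp fun j hj => by simpa using hj)
    ((compl_ne_univ_iff_nonempty _).mpr (singleton_nonempty i))
  have h_split := sum_add_sum_compl {i} x
  rw [sum_singleton] at h_single h_split
  linarith

theorem le_lcv_of_mem_epsCore [Nontrivial ι] {ε : ℝ} {x : ι → ℝ}
    (hx : x ∈ epsCore v ε) : ε ≤ lcv v :=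
  le_csSup (bddAbove_setOf_epsCore_nonempty v) ⟨x, hx⟩

def vetoAllocation (a : ι) (ε : ℝ) : ι → ℝ :=
  fun i => ε + (Pi.single a (v univ - Fintype.card ι * ε) : ι → ℝ) i

theorem sum_vetoAllocation (a : ι) (ε : ℝ) (S : Finset ι) :
    ∑ i ∈ S, vetoAllocation v a ε i =
      S.card * ε + if a ∈ S then v univ - Fintype.card ι * ε else 0 := by
  simp only [vetoAllocation, sum_add_distrib, sum_const, nsmul_eq_mul, sum_pi_single']

theorem exists_mem_Pbar_superset {a : ι} {S : Finset ι} (ha : a ∈ S) (hS : S ≠ univ) :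
    ∃ T ∈ Pbar a, S ⊆ T := by
  obtain ⟨i, hi⟩ : ∃ i, i ∉ S := by simpa [eq_univ_iff_forall] using hS
  refine ⟨univ.erase i, ?_,
    fun j hj => mem_erase.mpr ⟨ne_of_mem_of_not_mem hj hi, mem_univ j⟩⟩
  simp only [Pbar, mem_filter, mem_univ, true_and, mem_erase, ne_eq, card_erase_of_mem,
    card_univ, and_true]
  exact ne_of_mem_of_not_mem ha hi

theorem vetoAllocation_mem_epsCore {a : ι} (hveto : ∀ S : Finset ι, a ∉ S → v S = 0)
    (hmono : ∀ S T : Finset ι, S ⊆ T → v S ≤ v T) {M ε : ℝ}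
    (hM : ∀ T ∈ Pbar a, v T ≤ M) (hε : 0 ≤ ε) (hεM : Fintype.card ι * ε ≤ v univ - M) :
    vetoAllocation v a ε ∈ epsCore v ε := by
  refine ⟨by simp [sum_vetoAllocation], fun S hS hSne => ?_⟩
  have hεS : ε ≤ S.card * ε := le_mul_of_one_le_left hε (by exact_mod_cast hS.card_pos)
  rw [sum_vetoAllocation]
  by_cases ha : a ∈ S
  · obtain ⟨T, hT, hST⟩ := exists_mem_Pbar_superset ha hSne
    have hvS : v S ≤ M := (hmono S T hST).trans (hM T hT)
    rw [if_pos ha]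
    linarith
  · rw [if_neg ha, hveto S ha]
    linarith

end

theorem stmt5_general {ι : Type*} [Fintype ι] [DecidableEq ι] (v : Finset ι → ℝ) (a : ι)
    (hcard : 2 ≤ Fintype.card ι)
    (hveto : ∀ S : Finset ι, a ∉ S → v S = 0)
    (hmono : ∀ S T : Finset ι, S ⊆ T → v S ≤ v T)
    (hPbar : (Pbar a).Nonempty) :
    (v Finset.univ - (Pbar a).sup' hPbar v) / (Fintype.card ι : ℝ) ≤ lcv v := by
  have : Nontrivial ι := Fintype.one_lt_card_iff_nontrivial.mp hcard
  have hn : (0 : ℝ) < Fintype.card ι := by exact_mod_cast Fintype.card_pos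
  have hM : (Pbar a).sup' hPbar v ≤ v univ := sup'_le _ _ fun S _ => hmono S univ (subset_univ S)
  apply le_lcv_of_mem_epsCore v
  apply vetoAllocation_mem_epsCore v hveto hmono (M := (Pbar a).sup' hPbar v) (fun T => le_sup' v)
  · exact div_nonneg (sub_nonneg.mpr hM) hn.le
  · rw [mul_div_cancel₀ _ hn.ne']

/-- For a monotonic veto game with `|N| ≥ 2`, the least core value satisfies
`ε* ≥ (v(N) − max{ v(S) : S ∋ a, |S| = |N| − 1 }) / |N|`. -/
theorem stmt5 {ι : Type*} [Fintype ι] [DecidableEq ι] (v : Finset ι → ℝ) (a : ι)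
    (hcard : 2 ≤ Fintype.card ι)
    (hempty : v ∅ = 0)
    (hveto : ∀ S : Finset ι, a ∉ S → v S = 0)
    (hmono : ∀ S T : Finset ι, S ⊆ T → v S ≤ v T)
    (hPbar : (Pbar a).Nonempty) :
    (v Finset.univ - (Pbar a).sup' hPbar v) / (Fintype.card ι : ℝ) ≤ lcv v :=
  stmt5_general v a hcard hveto hmono hPbar
end

section
/- Let (N,v) be a TU game with veto player a, empty core, and least core value ε* = ε̂ := min{ (v(N)−v(S))/(|N|−|S|+1) : S proper, a ∈ S }. Then the argmin set of this minimization contains exactly one coalition. -/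
open Finset
open scoped Classical

/-- The set of proper coalitions containing the player `a`. -/
def Pa {ι : Type*} [Fintype ι] [DecidableEq ι] (a : ι) : Finset (Finset ι) :=
  Finset.univ.filter (fun S => a ∈ S ∧ S ≠ Finset.univ)

/-- The quantity `(v(N) − v(S))/(|N| − |S| + 1)`. -/
noncomputable def excessRatio {ι : Type*} [Fintype ι] [DecidableEq ι]
    (v : Finset ι → ℝ) (S : Finset ι) : ℝ :=
  (v Finset.univ - v S) / ((Fintype.card ι : ℝ) - (S.card : ℝ) + 1)

/-
If `S` and `T` are two distinct minimizers, choose players `j ∉ S` and `k ∉ T` with `j ≠ k`.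
In any strong ε-core allocation, the singletons outside `S` get at least `ε`, so the remaining
player `j` gets at most `(|Sᶜ| + 1) ε̂ - |Sᶜ| ε`; likewise for `k`. The pair `{j, k}` is worth `0`
by the veto property, so `x j + x k ≥ ε`, which forces `ε ≤ c ε̂` for a constant `c > 1`.
Taking the supremum over `ε` gives `ε* ≤ c ε*`, i.e. `ε* ≥ 0`; but an empty core means
`ε̂ < 0`, since otherwise giving everything to the veto player is a core allocation.
-/

section

variable {ι : Type*} [Fintype ι] [DecidableEq ι] {v : Finset ι → ℝ} {a : ι}

lemma exists_notMem_ne_of_ne {S T : Finset ι} (hST : S ≠ T) (hS : S ≠ univ) (hT : T ≠ univ) :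
    ∃ j ∉ S, ∃ k ∉ T, j ≠ k := by
  have exists_notMem : ∀ U : Finset ι, U ≠ univ → ∃ i, i ∉ U := fun U hU =>
    not_forall.1 (mt eq_univ_iff_forall.2 hU)
  by_cases hTS : T ⊆ S
  · obtain ⟨i, hiS, hiT⟩ := not_subset.1 fun hST' => hST (Subset.antisymm hST' hTS)
    obtain ⟨j, hj⟩ := exists_notMem S hS
    exact ⟨j, hj, i, hiT, fun h => hj (h ▸ hiS)⟩
  · obtain ⟨i, hiT, hiS⟩ := not_subset.1 hTS
    obtain ⟨k, hk⟩ := exists_notMem T hT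
    exact ⟨i, hiS, k, hk, fun h => hk (h ▸ hiT)⟩

lemma mem_Pa {S : Finset ι} : S ∈ Pa a ↔ a ∈ S ∧ S ≠ univ := by
  simp [Pa]

lemma card_compl_add_one_mul_excessRatio (v : Finset ι → ℝ) (S : Finset ι) :
    ((Sᶜ.card : ℝ) + 1) * excessRatio v S = v univ - v S := by
  have hS : (S.card : ℝ) ≤ Fintype.card ι := by exact_mod_cast card_le_univ S
  rw [excessRatio, card_compl, Nat.cast_sub (card_le_univ S)]
  exact mul_div_cancel₀ _ (by linarith)

lemma mem_epsCore_zero_of_veto (hveto : ∀ S : Finset ι, a ∉ S → v S = 0)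
    (hle : ∀ S ∈ Pa a, v S ≤ v univ) : Pi.single a (v univ) ∈ epsCore v 0 := by
  refine ⟨by simp, fun S _ hSu => ?_⟩
  rw [sum_pi_single', add_zero]
  by_cases ha : a ∈ S
  · simpa [ha] using hle S (mem_Pa.2 ⟨ha, hSu⟩)
  · simp [ha, hveto S ha]

lemma inf'_excessRatio_neg (hveto : ∀ S : Finset ι, a ∉ S → v S = 0)
    (hcore : ¬ (epsCore v 0).Nonempty) (hPa : (Pa a).Nonempty) :
    (Pa a).inf' hPa (excessRatio v) < 0 := by
  by_contra! h
  refine hcore ⟨_, mem_epsCore_zero_of_veto hveto fun S hS => ?_⟩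
  have hS0 : 0 ≤ excessRatio v S := (le_inf'_iff hPa _).1 h S hS
  rw [← sub_nonneg, ← card_compl_add_one_mul_excessRatio]
  exact mul_nonneg (by positivity) hS0

lemma le_sum_of_mem_epsCore_of_veto {ε : ℝ} {x : ι → ℝ} (hx : x ∈ epsCore v ε)
    (hveto : ∀ S : Finset ι, a ∉ S → v S = 0) {T : Finset ι} (hT : T.Nonempty) (haT : a ∉ T) :
    ε ≤ ∑ i ∈ T, x i := by
  have := hx.2 T hT fun h => haT (h ▸ mem_univ a)
  rwa [hveto T haT, zero_add] at this

lemma apply_le_of_mem_epsCore {ε : ℝ} {x : ι → ℝ} (hx : x ∈ epsCore v ε) {S : Finset ι}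
    (hS : S.Nonempty) (hSu : S ≠ univ) {j : ι} (hj : j ∉ S)
    (hsingle : ∀ i ∈ Sᶜ.erase j, ε ≤ x i) :
    x j ≤ v univ - v S - Sᶜ.card * ε := by
  have hjS : j ∈ Sᶜ := mem_compl.2 hj
  have hsplit : ∑ i ∈ S, x i + (x j + ∑ i ∈ Sᶜ.erase j, x i) = v univ := by
    rw [add_sum_erase _ _ hjS, sum_add_sum_compl, hx.1]
  have hrest : (Sᶜ.erase j).card • ε ≤ ∑ i ∈ Sᶜ.erase j, x i := card_nsmul_le_sum _ _ _ hsingle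
  have hcard : ((Sᶜ.erase j).card : ℝ) + 1 = Sᶜ.card := by exact_mod_cast card_erase_add_one hjS
  rw [nsmul_eq_mul] at hrest
  rw [← hcard]
  linarith [hx.2 S hS hSu]

lemma apply_le_of_mem_epsCore_of_veto {ε : ℝ} {x : ι → ℝ} (hx : x ∈ epsCore v ε)
    (hveto : ∀ S : Finset ι, a ∉ S → v S = 0) {S : Finset ι} (hS : S ∈ Pa a) {j : ι}
    (hj : j ∉ S) :
    x j ≤ (Sᶜ.card + 1) * excessRatio v S - Sᶜ.card * ε := by
  obtain ⟨haS, hSu⟩ := mem_Pa.1 hS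
  rw [card_compl_add_one_mul_excessRatio]
  refine apply_le_of_mem_epsCore hx ⟨a, haS⟩ hSu hj fun i hi => ?_
  have hia : i ≠ a := by
    rintro rfl
    exact mem_compl.1 (mem_of_mem_erase hi) haS
  have hai : a ∉ ({i} : Finset ι) := by simpa using hia.symm
  simpa using le_sum_of_mem_epsCore_of_veto hx hveto (singleton_nonempty i) hai

lemma lcv_nonneg_of_excessRatio_eq (hveto : ∀ S : Finset ι, a ∉ S → v S = 0)
    (hfeas : {ε : ℝ | (epsCore v ε).Nonempty}.Nonempty) {S T : Finset ι} (hS : S ∈ Pa a)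
    (hT : T ∈ Pa a) (hST : S ≠ T) (hSe : excessRatio v S = lcv v)
    (hTe : excessRatio v T = lcv v) : 0 ≤ lcv v := by
  obtain ⟨haS, hSu⟩ := mem_Pa.1 hS
  obtain ⟨haT, hTu⟩ := mem_Pa.1 hT
  obtain ⟨j, hjS, k, hkT, hjk⟩ := exists_notMem_ne_of_ne hST hSu hTu
  set A : ℝ := (Sᶜ.card : ℝ)
  set B : ℝ := (Tᶜ.card : ℝ)
  have hpos : 0 < A + B + 1 := by positivity
  have hbound :
      ∀ ε ∈ {ε : ℝ | (epsCore v ε).Nonempty}, ε ≤ (A + B + 2) * lcv v / (A + B + 1) := by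
    rintro ε ⟨x, hx⟩
    have hj := apply_le_of_mem_epsCore_of_veto hx hveto hS hjS
    have hk := apply_le_of_mem_epsCore_of_veto hx hveto hT hkT
    have hjk' : ε ≤ x j + x k := by
      have hapair : a ∉ ({j, k} : Finset ι) := by
        simp only [mem_insert, mem_singleton, not_or]
        exact ⟨fun h => hjS (h ▸ haS), fun h => hkT (h ▸ haT)⟩
      simpa [sum_pair hjk] using
        le_sum_of_mem_epsCore_of_veto hx hveto (insert_nonempty j {k}) hapair
    rw [hSe] at hj
    rw [hTe] at hk
    rw [le_div_iff₀ hpos]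
    linarith
  have hle : lcv v ≤ (A + B + 2) * lcv v / (A + B + 1) := csSup_le hfeas hbound
  rw [le_div_iff₀ hpos] at hle
  linarith

end

theorem stmt13_general {ι : Type*} [Fintype ι] [DecidableEq ι] (v : Finset ι → ℝ) (a : ι)
    (hveto : ∀ S : Finset ι, a ∉ S → v S = 0)
    (hcore : ¬ (epsCore v 0).Nonempty)
    (hPa : (Pa a).Nonempty)
    (hstar : lcv v = (Pa a).inf' hPa (excessRatio v)) :
    ((Pa a).filter
      (fun S => excessRatio v S = (Pa a).inf' hPa (excessRatio v))).card = 1 := by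
  have hneg := inf'_excessRatio_neg hveto hcore hPa
  have hfeas : {ε : ℝ | (epsCore v ε).Nonempty}.Nonempty := by
    by_contra h
    rw [Set.not_nonempty_iff_eq_empty] at h
    rw [lcv, h, Real.sSup_empty] at hstar
    linarith
  rw [← hstar] at hneg ⊢
  obtain ⟨S, hS, hSe⟩ := exists_mem_eq_inf' hPa (excessRatio v)
  refine card_eq_one.2 ⟨S, eq_singleton_iff_unique_mem.2 ⟨mem_filter.2 ⟨hS, hstar ▸ hSe.symm⟩, ?_⟩⟩
  intro T hT
  by_contra hTS
  exact hneg.not_ge (lcv_nonneg_of_excessRatio_eq hveto hfeas (mem_filter.1 hT).1 hS hTS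
    (mem_filter.1 hT).2 (hstar ▸ hSe.symm))

/-- For a veto game with empty core whose least core value equals
`ε̂ = min{(v(N)−v(S))/(|N|−|S|+1) : S proper, a ∈ S}`, the argmin set of this
minimization contains exactly one coalition. -/
theorem stmt13 {ι : Type*} [Fintype ι] [DecidableEq ι] (v : Finset ι → ℝ) (a : ι)
    (hcard : 3 ≤ Fintype.card ι)
    (hempty : v ∅ = 0)
    (hveto : ∀ S : Finset ι, a ∉ S → v S = 0)
    (hcore : ¬ (epsCore v 0).Nonempty)
    (hPa : (Pa a).Nonempty)
    (hstar : lcv v = (Pa a).inf' hPa (excessRatio v)) :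
    ((Pa a).filter
      (fun S => excessRatio v S = (Pa a).inf' hPa (excessRatio v))).card = 1 :=
  stmt13_general v a hveto hcore hPa hstar
end
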